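/- Under the SMG setting with assumptions (a), (b), (c) and the subproblem Lipschitz assumption, suppose additionally that each f_i is c_i-strongly convex with c = min_{1≤i≤m} c_i > 0. Then for every k and every x_* ∈ X, E_{w_k}[‖x_{k+1} − x_*‖²] ≤ (1 − α_k c)‖x_k − x_*‖² + α_k² M − 2α_k (S(x_k, λ_k) − S(x_*, λ_k)) holds almost surely, where M = L_g² + 2Θ(L_{∇S} + β L_{∇S} M_S). -/

import Mathlib

open MeasureTheory
open scoped RealInnerProductSpace BigOperators

section Helpers

variable {Ω : Type*} {mΩ : MeasurableSpace Ω} {μ : Measure Ω}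

lemma aux_integrable_of_bdd [IsFiniteMeasure μ] {f : Ω → ℝ} (hmeas : AEStronglyMeasurable f μ)
    {C : ℝ} (h : ∀ ω, |f ω| ≤ C) : Integrable f μ :=
  ⟨hmeas, HasFiniteIntegral.of_bounded (C := C) (ae_of_all _ (by simpa using h))⟩

end Helpers

set_option maxHeartbeats 1000000 in
lemma aux_condExp_clm {Ω : Type*} {m' mΩ : MeasurableSpace Ω} {μ : Measure Ω}
    (hm : m' ≤ mΩ) [IsFiniteMeasure μ]
    {E F : Type*} [NormedAddCommGroup E] [NormedSpace ℝ E] [CompleteSpace E]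
    [NormedAddCommGroup F] [NormedSpace ℝ F] [CompleteSpace F]
    (ℓ : E →L[ℝ] F) {g : Ω → E} (hg : Integrable g μ) :
    (fun ω => ℓ ((μ[g|m']) ω)) =ᵐ[μ] μ[fun ω => ℓ (g ω)|m'] := by
  refine ae_eq_condExp_of_forall_setIntegral_eq hm (ℓ.integrable_comp hg)
    (fun s _ _ => (ℓ.integrable_comp integrable_condExp).integrableOn)
    (fun s hs _ => ?_) ?_
  · rw [ContinuousLinearMap.integral_comp_comm ℓ integrable_condExp.integrableOn,
      ContinuousLinearMap.integral_comp_comm ℓ hg.integrableOn,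
      setIntegral_condExp hm hg hs]
  · exact StronglyMeasurable.aestronglyMeasurable
      (ℓ.continuous.comp_stronglyMeasurable stronglyMeasurable_condExp)

lemma aux_proj {E : Type*} [NormedAddCommGroup E] [InnerProductSpace ℝ E]
    {K : Set E} (hK : Convex ℝ K) {z p y : E} (hp : p ∈ K) (hy : y ∈ K)
    (hmin : ∀ w ∈ K, ‖z - p‖ ≤ ‖z - w‖) : ‖p - y‖ ^ 2 ≤ ‖z - y‖ ^ 2 := by
  haveI : Nonempty K := ⟨⟨p, hp⟩⟩
  have heq : ‖z - p‖ = ⨅ w : K, ‖z - w‖ :=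
    le_antisymm (le_ciInf fun w => hmin w w.2)
      (ciInf_le (⟨0, by rintro r ⟨w, rfl⟩; exact norm_nonneg _⟩ : BddBelow (Set.range fun w : K => ‖z - w‖)) ⟨p, hp⟩)
  have hin : ⟪z - p, y - p⟫ ≤ 0 := ((norm_eq_iInf_iff_real_inner_le_zero hK hp).1 heq) y hy
  have hexp : ‖z - y‖ ^ 2 = ‖z - p‖ ^ 2 - 2 * ⟪z - p, y - p⟫ + ‖y - p‖ ^ 2 := by
    rw [show z - y = (z - p) - (y - p) by abel, norm_sub_sq_real]
  rw [norm_sub_rev p y]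
  nlinarith [sq_nonneg ‖z - p‖]

lemma aux_sum_abs_le {m : ℕ} (w : EuclideanSpace ℝ (Fin m)) :
    ∑ i, |w i| ≤ Real.sqrt m * ‖w‖ := by
  have h1 : (∑ i, |w i|) ^ 2 ≤ (m : ℝ) * ∑ i, |w i| ^ 2 := by
    simpa using sq_sum_le_card_mul_sum_sq (s := (Finset.univ : Finset (Fin m)))
      (f := fun i => |w i|)
  have hn : ‖w‖ = Real.sqrt (∑ i, |w i| ^ 2) := by
    simp [EuclideanSpace.norm_eq, Real.norm_eq_abs]
  calc ∑ i, |w i| = Real.sqrt ((∑ i, |w i|) ^ 2) :=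
        (Real.sqrt_sq (Finset.sum_nonneg fun i _ => abs_nonneg _)).symm
    _ ≤ Real.sqrt ((m : ℝ) * ∑ i, |w i| ^ 2) := Real.sqrt_le_sqrt h1
    _ = Real.sqrt m * ‖w‖ := by
        rw [Real.sqrt_mul (by positivity), hn]

lemma aux_sqrt_sum_sq_le {ι : Type*} [Fintype ι] (y : ι → ℝ) (hy : ∀ i, 0 ≤ y i) :
    Real.sqrt (∑ i, y i ^ 2) ≤ ∑ i, y i := by
  calc Real.sqrt (∑ i, y i ^ 2) ≤ Real.sqrt ((∑ i, y i) ^ 2) :=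
        Real.sqrt_le_sqrt (Finset.sum_sq_le_sq_sum_of_nonneg fun i _ => hy i)
    _ = ∑ i, y i := Real.sqrt_sq (Finset.sum_nonneg fun i _ => hy i)

lemma aux_abs_coord_le {m : ℕ} (w : EuclideanSpace ℝ (Fin m)) (i : Fin m) : |w i| ≤ ‖w‖ := by
  rw [EuclideanSpace.norm_eq]
  calc |w i| = Real.sqrt (|w i| ^ 2) := (Real.sqrt_sq (abs_nonneg _)).symm
    _ ≤ _ := Real.sqrt_le_sqrt (by
        refine Finset.single_le_sum (f := fun j => ‖w j‖ ^ 2) (fun j _ => by positivity)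
          (Finset.mem_univ i) |>.trans_eq' ?_
        simp [Real.norm_eq_abs])


set_option maxHeartbeats 2000000

/-- Per-iteration conditional decrease inequality for the stochastic multi-gradient method
under strong convexity:
`E_{w_k}[‖x_{k+1} − x_*‖²] ≤ (1 − α_k c)‖x_k − x_*‖² + α_k²M − 2α_k(S(x_k,λ_k) − S(x_*,λ_k))`
a.s., with `M = L_g² + 2Θ(L_{∇S} + βL_{∇S}M_S)`. -/
theorem stmt14 {n m : ℕ} {Ω : Type*} {mΩ : MeasurableSpace Ω}
    (μ : Measure Ω) [IsProbabilityMeasure μ]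
    -- the feasible region
    (X : Set (EuclideanSpace ℝ (Fin n))) (hXne : X.Nonempty) (hXcl : IsClosed X)
    (hXcv : Convex ℝ X) (Θ : ℝ) (hdiam : ∀ x ∈ X, ∀ y ∈ X, ‖x - y‖ ≤ Θ)
    -- the objective functions and their gradients
    (f : Fin m → EuclideanSpace ℝ (Fin n) → ℝ)
    (gf : Fin m → EuclideanSpace ℝ (Fin n) → EuclideanSpace ℝ (Fin n))
    (hgrad : ∀ i x, HasGradientAt (f i) (gf i x) x)
    (L : Fin m → ℝ) (hLpos : ∀ i, 0 < L i)
    (hLip : ∀ i (x y : EuclideanSpace ℝ (Fin n)), ‖gf i x - gf i y‖ ≤ L i * ‖x - y‖)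
    (Lc : ℝ) (hLc : IsGreatest (Set.range L) Lc)
    (Mgrad : ℝ) (hgfbd : ∀ i, ∀ x ∈ X, ‖gf i x‖ ≤ Mgrad + Lc * Θ)
    -- strong convexity
    (cv : Fin m → ℝ) (hcv : ∀ i, 0 < cv i)
    (hsc : ∀ i (x y : EuclideanSpace ℝ (Fin n)),
      f i y ≥ f i x + ⟪gf i x, y - x⟫ + cv i / 2 * ‖y - x‖ ^ 2)
    (c : ℝ) (hc : IsLeast (Set.range cv) c)
    -- the σ-algebras generated by the information up to iteration k
    (𝒢 : ℕ → MeasurableSpace Ω) (h𝒢 : ∀ k, 𝒢 k ≤ mΩ)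
    -- stepsizes
    (α : ℕ → ℝ) (hαpos : ∀ k, 0 < α k)
    -- iterates, stochastic gradients and subproblem solutions
    (x : ℕ → Ω → EuclideanSpace ℝ (Fin n))
    (hxmeas : ∀ k, StronglyMeasurable[𝒢 k] (x k))
    (hxX : ∀ k ω, x k ω ∈ X)
    (g : Fin m → ℕ → Ω → EuclideanSpace ℝ (Fin n))
    (hgL2 : ∀ i k, MemLp (g i k) 2 μ)
    (lamg lam : ℕ → Ω → EuclideanSpace ℝ (Fin m))
    (hlamg_meas : ∀ k, Measurable (lamg k))
    (hlam_meas : ∀ k, StronglyMeasurable[𝒢 k] (lam k))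
    (hlamg : ∀ k ω, WithLp.ofLp (lamg k ω) ∈ stdSimplex ℝ (Fin m) ∧
      ∀ z ∈ stdSimplex ℝ (Fin m),
        ‖∑ i, lamg k ω i • g i k ω‖ ^ 2 ≤ ‖∑ i, z i • g i k ω‖ ^ 2)
    (hlam : ∀ k ω, WithLp.ofLp (lam k ω) ∈ stdSimplex ℝ (Fin m) ∧
      ∀ z ∈ stdSimplex ℝ (Fin m),
        ‖∑ i, lam k ω i • gf i (x k ω)‖ ^ 2 ≤ ‖∑ i, z i • gf i (x k ω)‖ ^ 2)
    -- the projected stochastic multi-gradient update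
    (hupd : ∀ k ω, x (k + 1) ω ∈ X ∧ ∀ y ∈ X,
      ‖x k ω - α k • (∑ i, lamg k ω i • g i k ω) - x (k + 1) ω‖ ≤
      ‖x k ω - α k • (∑ i, lamg k ω i • g i k ω) - y‖)
    -- assumption (a): unbiasedness
    (ha : ∀ i k, μ[g i k | 𝒢 k] =ᵐ[μ] fun ω => gf i (x k ω))
    -- assumption (b): bound on the first moment
    (C Chat : Fin m → ℝ) (hC : ∀ i, 0 < C i) (hChat : ∀ i, 0 < Chat i)
    (hb : ∀ i k, ∀ᵐ ω ∂μ,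
      (μ[fun ω' => ‖g i k ω' - gf i (x k ω')‖ | 𝒢 k]) ω ≤
        α k * (C i + Chat i * ‖gf i (x k ω)‖))
    -- assumption (c): bound on the second moment
    (G Ghat : Fin m → ℝ) (hG : ∀ i, 0 < G i) (hGhat : ∀ i, 0 < Ghat i)
    (hc2 : ∀ i k, ∀ᵐ ω ∂μ,
      (μ[fun ω' => ‖g i k ω' - gf i (x k ω')‖ ^ 2 | 𝒢 k]) ω ≤
        G i ^ 2 + Ghat i ^ 2 * ‖gf i (x k ω)‖ ^ 2)
    -- subproblem Lipschitz continuity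
    (β : ℝ) (hβ : 0 < β)
    (hsub : ∀ k, ∀ᵐ ω ∂μ,
      ‖lamg k ω - lam k ω‖ ≤ β * Real.sqrt (∑ i, ‖g i k ω - gf i (x k ω)‖ ^ 2))
    -- the constants
    (M1 MF LS Gmax Lg2 MS : ℝ)
    (hM1 : M1 = ∑ i, C i) (hMF : IsGreatest (Set.range Chat) MF)
    (hLS : LS = M1 + (m : ℝ) * MF * (Mgrad + Lc * Θ))
    (hGmax : IsGreatest (Set.range fun i => Ghat i ^ 2 + 1) Gmax)
    (hLg2 : Lg2 = (m : ℝ) * (∑ i, G i ^ 2) + (m : ℝ) * ((m : ℝ) * Gmax) * (Mgrad + Lc * Θ) ^ 2)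
    (hMS : MS = Real.sqrt ((m : ℝ) * (n : ℝ)) * (Mgrad + Lc * Θ))
    (M : ℝ) (hMdef : M = Lg2 + 2 * Θ * (LS + β * LS * MS)) :
    ∀ k : ℕ, ∀ xstar ∈ X, ∀ᵐ ω ∂μ,
      (μ[fun ω' => ‖x (k + 1) ω' - xstar‖ ^ 2 | 𝒢 k]) ω ≤
        (1 - α k * c) * ‖x k ω - xstar‖ ^ 2 + α k ^ 2 * M -
          2 * α k * ((∑ i, lam k ω i * f i (x k ω)) - ∑ i, lam k ω i * f i xstar) := by
  intro k xstar hxstar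
  obtain ⟨x₀, hx₀⟩ := hXne
  obtain ⟨i₀, hi₀⟩ := hLc.1
  have hmk : 𝒢 k ≤ mΩ := h𝒢 k
  have hαk : 0 < α k := hαpos k
  have hΘ : 0 ≤ Θ := by simpa using hdiam x₀ hx₀ x₀ hx₀
  have hB₀ : (0:ℝ) ≤ Mgrad + Lc * Θ := le_trans (norm_nonneg _) (hgfbd i₀ x₀ hx₀)
  have hMS0 : 0 ≤ MS := by rw [hMS]; positivity
  have hβMS : (0:ℝ) ≤ 1 + β * MS := by positivity
  have hcpos : 0 < c := by obtain ⟨i, hi⟩ := hc.1; exact hi ▸ hcv i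
  -- simplex facts
  have hlam_nonneg : ∀ ω i, 0 ≤ lam k ω i := fun ω i => (hlam k ω).1.1 i
  have hlam_sum : ∀ ω, ∑ i, lam k ω i = 1 := fun ω => (hlam k ω).1.2
  have hlamg_nonneg : ∀ ω i, 0 ≤ lamg k ω i := fun ω i => (hlamg k ω).1.1 i
  have hlamg_sum : ∀ ω, ∑ i, lamg k ω i = 1 := fun ω => (hlamg k ω).1.2
  have hlamg_le1 : ∀ ω i, lamg k ω i ≤ 1 := by
    intro ω i
    have h1 := Finset.single_le_sum (f := fun j => lamg k ω j)
      (fun j _ => hlamg_nonneg ω j) (Finset.mem_univ i)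
    simpa [hlamg_sum ω] using h1
  have hlam_le1 : ∀ ω i, lam k ω i ≤ 1 := by
    intro ω i
    have h1 := Finset.single_le_sum (f := fun j => lam k ω j)
      (fun j _ => hlam_nonneg ω j) (Finset.mem_univ i)
    simpa [hlam_sum ω] using h1
  -- abbreviations
  set v : Fin m → Ω → EuclideanSpace ℝ (Fin n) := fun i ω => gf i (x k ω) with hvdef
  set d : Ω → EuclideanSpace ℝ (Fin n) := fun ω => x k ω - xstar with hddef
  set gw : Ω → EuclideanSpace ℝ (Fin n) := fun ω => ∑ i, lamg k ω i • g i k ω with hgwdef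
  set Sl : Ω → EuclideanSpace ℝ (Fin n) := fun ω => ∑ i, lam k ω i • v i ω with hSldef
  -- measurability
  have hxk_sm : StronglyMeasurable (x k) := (hxmeas k).mono hmk
  have hgfc : ∀ i, Continuous (gf i) := by
    intro i
    have hl : LipschitzWith (L i).toNNReal (gf i) := by
      apply LipschitzWith.of_dist_le_mul
      intro a b
      rw [dist_eq_norm, dist_eq_norm, Real.coe_toNNReal _ (hLpos i).le]
      exact hLip i a b
    exact hl.continuous
  have hv_smG : ∀ i, StronglyMeasurable[𝒢 k] (v i) :=
    fun i => (hgfc i).comp_stronglyMeasurable (hxmeas k)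
  have hv_bd : ∀ i ω, ‖v i ω‖ ≤ Mgrad + Lc * Θ := fun i ω => hgfbd i _ (hxX k ω)
  have hd_bd : ∀ ω, ‖d ω‖ ≤ Θ := fun ω => hdiam _ (hxX k ω) xstar hxstar
  have hd_smG : StronglyMeasurable[𝒢 k] d := (hxmeas k).sub stronglyMeasurable_const
  have hd_sm : StronglyMeasurable d := hd_smG.mono hmk
  have hg_aesm : ∀ i, AEStronglyMeasurable (g i k) μ := fun i => (hgL2 i k).1
  have hg_int : ∀ i, Integrable (g i k) μ := fun i => (hgL2 i k).integrable one_le_two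
  have hlamg_i : ∀ i, Measurable (fun ω => lamg k ω i) := fun i =>
    ((EuclideanSpace.proj (𝕜 := ℝ) i).continuous.measurable).comp (hlamg_meas k)
  have hgw_aesm : AEStronglyMeasurable gw μ := by
    have h1 : AEStronglyMeasurable (∑ i, fun ω => lamg k ω i • g i k ω) μ :=
      Finset.aestronglyMeasurable_sum _ fun i _ =>
        ((hlamg_i i).aestronglyMeasurable.smul (hg_aesm i))
    have h2 : gw = ∑ i, fun ω => lamg k ω i • g i k ω := by
      funext ω; simp [hgwdef, Finset.sum_apply]
    rw [h2]; exact h1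
  have hSl_smG : StronglyMeasurable[𝒢 k] Sl := by
    have h1 : StronglyMeasurable[𝒢 k] (∑ i, fun ω => lam k ω i • v i ω) :=
      Finset.stronglyMeasurable_sum _ fun i _ =>
        (((EuclideanSpace.proj (𝕜 := ℝ) i).continuous.comp_stronglyMeasurable
          (hlam_meas k)).smul (hv_smG i))
    have h2 : Sl = ∑ i, fun ω => lam k ω i • v i ω := by
      funext ω; simp [hSldef, Finset.sum_apply]
    rw [h2]; exact h1
  have hSl_bd : ∀ ω, ‖Sl ω‖ ≤ (m : ℝ) * (Mgrad + Lc * Θ) := by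
    intro ω
    calc ‖Sl ω‖ ≤ ∑ i, ‖lam k ω i • v i ω‖ := norm_sum_le _ _
      _ ≤ ∑ _i : Fin m, (Mgrad + Lc * Θ) := by
          refine Finset.sum_le_sum fun i _ => ?_
          rw [norm_smul, Real.norm_eq_abs, abs_of_nonneg (hlam_nonneg ω i)]
          calc lam k ω i * ‖v i ω‖ ≤ 1 * (Mgrad + Lc * Θ) :=
                mul_le_mul (hlam_le1 ω i) (hv_bd i ω) (norm_nonneg _) one_pos.le
            _ = _ := one_mul _
      _ = (m : ℝ) * (Mgrad + Lc * Θ) := by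
          rw [Finset.sum_const, Finset.card_univ, Fintype.card_fin, nsmul_eq_mul]
  -- integrability package
  have int_v : ∀ i, MemLp (v i) 2 μ := fun i =>
    MemLp.of_bound ((hv_smG i).mono hmk).aestronglyMeasurable _
      (ae_of_all _ fun ω => hv_bd i ω)
  have int_gv : ∀ i, MemLp (fun ω => g i k ω - v i ω) 2 μ := fun i => by
    have := (hgL2 i k).sub (int_v i)
    exact this
  have int_hi : ∀ i, Integrable (fun ω => ‖g i k ω - v i ω‖) μ := fun i =>
    ((int_gv i).integrable one_le_two).norm
  have int_hi2 : ∀ i, Integrable (fun ω => ‖g i k ω - v i ω‖ ^ 2) μ := fun i =>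
    (int_gv i).norm.integrable_sq
  have int_gnorm : ∀ i, Integrable (fun ω => ‖g i k ω‖) μ := fun i => (hg_int i).norm
  have int_g2 : ∀ i, Integrable (fun ω => ‖g i k ω‖ ^ 2) μ := fun i =>
    (hgL2 i k).norm.integrable_sq
  have hx1_sm : StronglyMeasurable (x (k + 1)) := (hxmeas (k + 1)).mono (h𝒢 (k + 1))
  have int_q : Integrable (fun ω' => ‖x (k + 1) ω' - xstar‖ ^ 2) μ := by
    refine aux_integrable_of_bdd ?_ (C := Θ ^ 2) fun ω => ?_
    · have h0 : StronglyMeasurable (fun ω' => x (k + 1) ω' - xstar) :=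
        hx1_sm.sub stronglyMeasurable_const
      have h1 := h0.norm
      have h2 : StronglyMeasurable (fun ω' => ‖x (k + 1) ω' - xstar‖ ^ 2) := by
        simp_rw [pow_two]; exact h1.mul h1
      exact h2.aestronglyMeasurable
    · rw [abs_of_nonneg (by positivity)]
      exact pow_le_pow_left₀ (norm_nonneg _) (hdiam _ (hupd k ω).1 xstar hxstar) 2
  have hA_smG : StronglyMeasurable[𝒢 k] (fun ω => ‖d ω‖ ^ 2) := by
    simp_rw [pow_two]; exact hd_smG.norm.mul hd_smG.norm
  have int_A : Integrable (fun ω => ‖d ω‖ ^ 2) μ := by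
    refine aux_integrable_of_bdd (hA_smG.mono hmk).aestronglyMeasurable (C := Θ ^ 2) fun ω => ?_
    rw [abs_of_nonneg (by positivity)]
    exact pow_le_pow_left₀ (norm_nonneg _) (hd_bd ω) 2
  have hgw_le : ∀ ω, ‖gw ω‖ ≤ ∑ i, ‖g i k ω‖ := by
    intro ω
    calc ‖gw ω‖ ≤ ∑ i, ‖lamg k ω i • g i k ω‖ := norm_sum_le _ _
      _ ≤ ∑ i, ‖g i k ω‖ := by
          refine Finset.sum_le_sum fun i _ => ?_
          rw [norm_smul, Real.norm_eq_abs, abs_of_nonneg (hlamg_nonneg ω i)]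
          exact mul_le_of_le_one_left (norm_nonneg _) (hlamg_le1 ω i)
  have int_gnorm_sum : Integrable (fun ω => ∑ i, ‖g i k ω‖) μ :=
    integrable_finset_sum Finset.univ fun i _ => int_gnorm i
  have int_g2_sum : Integrable (fun ω => ∑ i, ‖g i k ω‖ ^ 2) μ :=
    integrable_finset_sum Finset.univ fun i _ => int_g2 i
  have int_B : Integrable (fun ω => (⟪gw ω, d ω⟫ : ℝ)) μ := by
    refine Integrable.mono' (int_gnorm_sum.const_mul Θ)
      (hgw_aesm.inner hd_sm.aestronglyMeasurable) (ae_of_all _ fun ω => ?_)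
    rw [Real.norm_eq_abs]
    calc |(⟪gw ω, d ω⟫ : ℝ)| ≤ ‖gw ω‖ * ‖d ω‖ := abs_real_inner_le_norm _ _
      _ ≤ (∑ i, ‖g i k ω‖) * Θ :=
          mul_le_mul (hgw_le ω) (hd_bd ω) (norm_nonneg _)
            (Finset.sum_nonneg fun i _ => norm_nonneg _)
      _ = Θ * ∑ i, ‖g i k ω‖ := mul_comm _ _
  have hQ_ptle : ∀ ω, ‖gw ω‖ ^ 2 ≤ (m : ℝ) * ∑ i, ‖g i k ω‖ ^ 2 := by
    intro ω
    have h1 : ‖gw ω‖ ^ 2 ≤ (∑ i, ‖g i k ω‖) ^ 2 :=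
      pow_le_pow_left₀ (norm_nonneg _) (hgw_le ω) 2
    refine h1.trans ?_
    simpa using sq_sum_le_card_mul_sum_sq (s := (Finset.univ : Finset (Fin m)))
      (f := fun i => ‖g i k ω‖)
  have int_Q : Integrable (fun ω => ‖gw ω‖ ^ 2) μ := by
    refine Integrable.mono' (int_g2_sum.const_mul m)
      ?_ (ae_of_all _ fun ω => ?_)
    · have h1 := hgw_aesm.norm
      have h2 : AEStronglyMeasurable (fun ω => ‖gw ω‖ ^ 2) μ := by
        simp_rw [pow_two]; exact h1.mul h1
      exact h2
    · rw [Real.norm_eq_abs, abs_of_nonneg (by positivity)]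
      exact hQ_ptle ω
  have int_Sd : Integrable (fun ω => (⟪Sl ω, d ω⟫ : ℝ)) μ := by
    refine aux_integrable_of_bdd
      ((hSl_smG.mono hmk).aestronglyMeasurable.inner hd_sm.aestronglyMeasurable)
      (C := (m : ℝ) * (Mgrad + Lc * Θ) * Θ) fun ω => ?_
    calc |(⟪Sl ω, d ω⟫ : ℝ)| ≤ ‖Sl ω‖ * ‖d ω‖ := abs_real_inner_le_norm _ _
      _ ≤ (m : ℝ) * (Mgrad + Lc * Θ) * Θ :=
          mul_le_mul (hSl_bd ω) (hd_bd ω) (norm_nonneg _) (by positivity)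
  have int_E1 : Integrable (fun ω => (⟪gw ω - Sl ω, d ω⟫ : ℝ)) μ := by
    refine Integrable.mono'
      ((int_gnorm_sum.add
        (integrable_const ((m : ℝ) * (Mgrad + Lc * Θ)))).const_mul Θ)
      ((hgw_aesm.sub (hSl_smG.mono hmk).aestronglyMeasurable).inner hd_sm.aestronglyMeasurable)
      (ae_of_all _ fun ω => ?_)
    rw [Real.norm_eq_abs]
    calc |(⟪gw ω - Sl ω, d ω⟫ : ℝ)| ≤ ‖gw ω - Sl ω‖ * ‖d ω‖ := abs_real_inner_le_norm _ _
      _ ≤ ((∑ i, ‖g i k ω‖) + (m : ℝ) * (Mgrad + Lc * Θ)) * Θ := by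
          refine mul_le_mul ((norm_sub_le _ _).trans ?_) (hd_bd ω) (norm_nonneg _) ?_
          · exact add_le_add (hgw_le ω) (hSl_bd ω)
          · positivity
      _ = Θ * ((∑ i, ‖g i k ω‖) + (m : ℝ) * (Mgrad + Lc * Θ)) := mul_comm _ _
  have int_W : Integrable (fun ω => ∑ i, ‖g i k ω - v i ω‖) μ :=
    integrable_finset_sum Finset.univ fun i _ => int_hi i
  -- step 1: pointwise inequality
  have step1 : ∀ ω, ‖x (k + 1) ω - xstar‖ ^ 2 ≤
      ‖d ω‖ ^ 2 - 2 * α k * ⟪gw ω, d ω⟫ + α k ^ 2 * ‖gw ω‖ ^ 2 := by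
    intro ω
    have hp := aux_proj hXcv (hupd k ω).1 hxstar (fun w hw => (hupd k ω).2 w hw)
    refine hp.trans (le_of_eq ?_)
    have he : x k ω - α k • gw ω - xstar = d ω - α k • gw ω := by
      rw [hddef]; exact sub_right_comm _ _ _
    rw [he, norm_sub_sq_real, real_inner_smul_right, norm_smul, Real.norm_eq_abs,
      abs_of_nonneg hαk.le, mul_pow, real_inner_comm (d ω) (gw ω)]
    ring
  -- step 2: condExp of the pointwise bound
  have hqR : μ[fun ω' => ‖x (k + 1) ω' - xstar‖ ^ 2|𝒢 k] ≤ᵐ[μ]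
      μ[fun ω => ‖d ω‖ ^ 2 - 2 * α k * ⟪gw ω, d ω⟫ + α k ^ 2 * ‖gw ω‖ ^ 2|𝒢 k] :=
    condExp_mono int_q
      ((int_A.sub (int_B.const_mul (2 * α k))).add (int_Q.const_mul (α k ^ 2)))
      (ae_of_all _ step1)
  have hlin : μ[fun ω => ‖d ω‖ ^ 2 - 2 * α k * ⟪gw ω, d ω⟫ + α k ^ 2 * ‖gw ω‖ ^ 2|𝒢 k]
      =ᵐ[μ] fun ω => ‖d ω‖ ^ 2 - 2 * α k * ((μ[fun ω' => (⟪gw ω', d ω'⟫ : ℝ)|𝒢 k]) ω)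
        + α k ^ 2 * ((μ[fun ω' => ‖gw ω'‖ ^ 2|𝒢 k]) ω) := by
    have e1 : (fun ω => ‖d ω‖ ^ 2 - 2 * α k * ⟪gw ω, d ω⟫ + α k ^ 2 * ‖gw ω‖ ^ 2)
        = ((fun ω => ‖d ω‖ ^ 2) - (2 * α k) • (fun ω' => (⟪gw ω', d ω'⟫ : ℝ)))
          + (α k ^ 2) • (fun ω' => ‖gw ω'‖ ^ 2) := by
      funext ω
      simp only [Pi.add_apply, Pi.sub_apply, Pi.smul_apply, smul_eq_mul]
    rw [e1]
    have h2 := condExp_add (m := 𝒢 k) (int_A.sub (int_B.smul (2 * α k))) (int_Q.smul (α k ^ 2))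
    have h3 := condExp_sub (m := 𝒢 k) int_A (int_B.smul (2 * α k))
    have h4 := condExp_smul (m := 𝒢 k) (μ := μ) (2 * α k) (fun ω' => (⟪gw ω', d ω'⟫ : ℝ))
    have h5 := condExp_smul (m := 𝒢 k) (μ := μ) (α k ^ 2) (fun ω' => ‖gw ω'‖ ^ 2)
    have h6 : μ[fun ω => ‖d ω‖ ^ 2|𝒢 k] = fun ω => ‖d ω‖ ^ 2 :=
      condExp_of_stronglyMeasurable hmk hA_smG int_A
    filter_upwards [h2, h3, h4, h5] with ω h2ω h3ω h4ω h5ω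
    rw [h2ω, Pi.add_apply, h3ω, Pi.sub_apply, h4ω, h5ω, h6]
    simp only [Pi.smul_apply, smul_eq_mul]
  -- decomposition of the inner-product term
  have hSd_smG : StronglyMeasurable[𝒢 k] (fun ω => (⟪Sl ω, d ω⟫ : ℝ)) :=
    hSl_smG.inner hd_smG
  have hBsplit : μ[fun ω' => (⟪gw ω', d ω'⟫ : ℝ)|𝒢 k] =ᵐ[μ]
      fun ω => (⟪Sl ω, d ω⟫ : ℝ) + (μ[fun ω' => (⟪gw ω' - Sl ω', d ω'⟫ : ℝ)|𝒢 k]) ω := by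
    have e : (fun ω' => (⟪gw ω', d ω'⟫ : ℝ))
        = (fun ω' => (⟪Sl ω', d ω'⟫ : ℝ)) + fun ω' => (⟪gw ω' - Sl ω', d ω'⟫ : ℝ) := by
      funext ω
      simp only [Pi.add_apply, inner_sub_left]
      ring
    rw [e]
    refine (condExp_add (m := 𝒢 k) int_Sd int_E1).trans ?_
    rw [condExp_of_stronglyMeasurable hmk hSd_smG int_Sd]
    exact Filter.EventuallyEq.rfl
  -- bound on the weighted gradient matrix
  have hMSb : ∀ (ω : Ω) (w : EuclideanSpace ℝ (Fin m)),
      ‖∑ i, w i • v i ω‖ ≤ MS * ‖w‖ := by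
    intro ω w
    rcases Nat.eq_zero_or_pos n with hn | hn
    · have hz : ‖∑ i, w i • v i ω‖ = 0 := by
        subst hn
        simp [EuclideanSpace.norm_eq]
      rw [hz]
      positivity
    · have h1 : ‖∑ i, w i • v i ω‖ ≤ (∑ i, |w i|) * (Mgrad + Lc * Θ) := by
        rw [Finset.sum_mul]
        refine (norm_sum_le _ _).trans (Finset.sum_le_sum fun i _ => ?_)
        rw [norm_smul, Real.norm_eq_abs]
        exact mul_le_mul_of_nonneg_left (hv_bd i ω) (abs_nonneg _)
      have h2 : (∑ i, |w i|) * (Mgrad + Lc * Θ) ≤ Real.sqrt m * ‖w‖ * (Mgrad + Lc * Θ) :=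
        mul_le_mul_of_nonneg_right (aux_sum_abs_le w) hB₀
      have h3 : Real.sqrt m * (Mgrad + Lc * Θ) ≤ MS := by
        rw [hMS]
        refine mul_le_mul_of_nonneg_right (Real.sqrt_le_sqrt ?_) hB₀
        have : (1 : ℝ) ≤ (n : ℝ) := by exact_mod_cast hn
        nlinarith [Nat.cast_nonneg (α := ℝ) m]
      calc ‖∑ i, w i • v i ω‖ ≤ Real.sqrt m * ‖w‖ * (Mgrad + Lc * Θ) := h1.trans h2
        _ = Real.sqrt m * (Mgrad + Lc * Θ) * ‖w‖ := by ring
        _ ≤ MS * ‖w‖ := mul_le_mul_of_nonneg_right h3 (norm_nonneg _)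
  -- a.s. pointwise lower bound for the error inner product
  have hE1ptwise : ∀ᵐ ω ∂μ, (-(Θ * (1 + β * MS))) * (∑ i, ‖g i k ω - v i ω‖)
      ≤ (⟪gw ω - Sl ω, d ω⟫ : ℝ) := by
    filter_upwards [hsub k] with ω hω
    set W := ∑ i, ‖g i k ω - v i ω‖ with hWdef
    have hW0 : 0 ≤ W := Finset.sum_nonneg fun i _ => norm_nonneg _
    have he1 : ‖gw ω - Sl ω‖ ≤ (1 + β * MS) * W := by
      have hdecomp : gw ω - Sl ω = (∑ i, lamg k ω i • (g i k ω - v i ω))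
          + ∑ i, (lamg k ω i - lam k ω i) • v i ω := by
        simp only [hgwdef, hSldef, smul_sub, sub_smul, Finset.sum_sub_distrib]
        abel
      have h1 : ‖∑ i, lamg k ω i • (g i k ω - v i ω)‖ ≤ W := by
        refine (norm_sum_le _ _).trans (Finset.sum_le_sum fun i _ => ?_)
        rw [norm_smul, Real.norm_eq_abs, abs_of_nonneg (hlamg_nonneg ω i)]
        exact mul_le_of_le_one_left (norm_nonneg _) (hlamg_le1 ω i)
      have h2 : ‖∑ i, (lamg k ω i - lam k ω i) • v i ω‖ ≤ MS * ‖lamg k ω - lam k ω‖ := by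
        have := hMSb ω (lamg k ω - lam k ω)
        simpa using this
      have h3 : ‖lamg k ω - lam k ω‖ ≤ β * W := by
        refine hω.trans ?_
        exact mul_le_mul_of_nonneg_left
          (aux_sqrt_sum_sq_le (fun i => ‖g i k ω - v i ω‖) fun i => norm_nonneg _) hβ.le
      calc ‖gw ω - Sl ω‖ ≤ ‖∑ i, lamg k ω i • (g i k ω - v i ω)‖
            + ‖∑ i, (lamg k ω i - lam k ω i) • v i ω‖ := by
            rw [hdecomp]; exact norm_add_le _ _
        _ ≤ W + MS * (β * W) := by
            refine add_le_add h1 (h2.trans ?_)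
            exact mul_le_mul_of_nonneg_left h3 hMS0
        _ = (1 + β * MS) * W := by ring
    have habs : |(⟪gw ω - Sl ω, d ω⟫ : ℝ)| ≤ ‖gw ω - Sl ω‖ * ‖d ω‖ := abs_real_inner_le_norm _ _
    have hub : |(⟪gw ω - Sl ω, d ω⟫ : ℝ)| ≤ ((1 + β * MS) * W) * Θ :=
      habs.trans (mul_le_mul he1 (hd_bd ω) (norm_nonneg _) (by positivity))
    have := neg_abs_le (⟪gw ω - Sl ω, d ω⟫ : ℝ)
    nlinarith
  -- conditional expectation of W
  have hW_cond : ∀ᵐ ω ∂μ, (μ[fun ω' => ∑ i, ‖g i k ω' - v i ω'‖|𝒢 k]) ω ≤ α k * LS := by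
    have hWsum : μ[fun ω' => ∑ i, ‖g i k ω' - v i ω'‖|𝒢 k]
        =ᵐ[μ] ∑ i, μ[fun ω' => ‖g i k ω' - v i ω'‖|𝒢 k] := by
      have e : (fun ω' => ∑ i, ‖g i k ω' - v i ω'‖)
          = ∑ i, fun ω' => ‖g i k ω' - v i ω'‖ := by
        funext ω'; simp [Finset.sum_apply]
      rw [e]
      exact condExp_finset_sum (fun i _ => int_hi i) (𝒢 k)
    have hball : ∀ᵐ ω ∂μ, ∀ i, (μ[fun ω' => ‖g i k ω' - v i ω'‖|𝒢 k]) ω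
        ≤ α k * (C i + Chat i * ‖v i ω‖) := ae_all_iff.2 fun i => hb i k
    filter_upwards [hWsum, hball] with ω h1 h2
    rw [h1, Finset.sum_apply]
    have hstep : ∀ i, (μ[fun ω' => ‖g i k ω' - v i ω'‖|𝒢 k]) ω
        ≤ α k * (C i + MF * (Mgrad + Lc * Θ)) := by
      intro i
      refine (h2 i).trans (mul_le_mul_of_nonneg_left ?_ hαk.le)
      have hChatMF : Chat i ≤ MF := hMF.2 ⟨i, rfl⟩
      have : Chat i * ‖v i ω‖ ≤ MF * (Mgrad + Lc * Θ) :=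
        mul_le_mul hChatMF (hv_bd i ω) (norm_nonneg _) ((hChat i).le.trans hChatMF)
      linarith
    calc ∑ i, (μ[fun ω' => ‖g i k ω' - v i ω'‖|𝒢 k]) ω
        ≤ ∑ i, α k * (C i + MF * (Mgrad + Lc * Θ)) := Finset.sum_le_sum fun i _ => hstep i
      _ = α k * LS := by
          rw [← Finset.mul_sum, Finset.sum_add_distrib, Finset.sum_const, Finset.card_univ,
            Fintype.card_fin, nsmul_eq_mul, hLS, hM1]
          ring
  -- conditional expectation lower bound for the error inner product
  have hE1_cond : ∀ᵐ ω ∂μ, -(Θ * (1 + β * MS) * (α k * LS))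
      ≤ (μ[fun ω' => (⟪gw ω' - Sl ω', d ω'⟫ : ℝ)|𝒢 k]) ω := by
    have h1 : μ[(-(Θ * (1 + β * MS))) • fun ω' => ∑ i, ‖g i k ω' - v i ω'‖|𝒢 k]
        ≤ᵐ[μ] μ[fun ω' => (⟪gw ω' - Sl ω', d ω'⟫ : ℝ)|𝒢 k] := by
      refine condExp_mono (int_W.smul _) int_E1 ?_
      filter_upwards [hE1ptwise] with ω hω
      simpa using hω
    have h2 := condExp_smul (m := 𝒢 k) (μ := μ) (-(Θ * (1 + β * MS)))
      (fun ω' => ∑ i, ‖g i k ω' - v i ω'‖)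
    filter_upwards [h1, h2, hW_cond] with ω hω1 hω2 hω3
    rw [hω2] at hω1
    simp only [Pi.smul_apply, smul_eq_mul] at hω1
    have hcst : 0 ≤ Θ * (1 + β * MS) := by positivity
    nlinarith
  -- conditional second moment of each stochastic gradient
  have hkey : ∀ i, (μ[fun ω' => ‖g i k ω'‖ ^ 2|𝒢 k]) ≤ᵐ[μ]
      fun ω => G i ^ 2 + (Ghat i ^ 2 + 1) * ‖v i ω‖ ^ 2 := by
    intro i
    -- conditional expectation of each coordinate
    have hcoord : ∀ j : Fin n, μ[fun ω => g i k ω j|𝒢 k] =ᵐ[μ] fun ω => v i ω j := by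
      intro j
      have h1 := aux_condExp_clm hmk (EuclideanSpace.proj (𝕜 := ℝ) j) (hg_int i)
      refine Filter.EventuallyEq.trans ?_ (h1.symm.trans ?_)
      · rfl
      · filter_upwards [ha i k] with ω hω
        simp only [PiLp.proj_apply]
        rw [hω]
    -- pull-out property for the cross term
    have hIP : μ[fun ω => (⟪v i ω, g i k ω⟫ : ℝ)|𝒢 k] =ᵐ[μ] fun ω => ‖v i ω‖ ^ 2 := by
      have hint2 : ∀ j : Fin n, Integrable (fun ω => g i k ω j) μ := fun j =>
        (EuclideanSpace.proj (𝕜 := ℝ) j).integrable_comp (hg_int i)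
      have hm1 : ∀ j : Fin n, StronglyMeasurable[𝒢 k] (fun ω => v i ω j) := fun j =>
        (EuclideanSpace.proj (𝕜 := ℝ) j).continuous.comp_stronglyMeasurable (hv_smG i)
      have hint1 : ∀ j : Fin n, Integrable (fun ω => v i ω j * g i k ω j) μ := by
        intro j
        refine Integrable.mono' ((hint2 j).norm.const_mul (Mgrad + Lc * Θ))
          (((hm1 j).mono hmk).aestronglyMeasurable.mul (hint2 j).1)
          (ae_of_all _ fun ω => ?_)
        rw [Real.norm_eq_abs, abs_mul]
        refine mul_le_mul ((aux_abs_coord_le (v i ω) j).trans (hv_bd i ω)) le_rfl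
          (abs_nonneg _) hB₀ |>.trans ?_
        rw [Real.norm_eq_abs]
      have hterm : ∀ j : Fin n, μ[fun ω => v i ω j * g i k ω j|𝒢 k]
          =ᵐ[μ] fun ω => v i ω j * v i ω j := by
        intro j
        have hmul := condExp_mul_of_stronglyMeasurable_left (hm1 j) (hint1 j) (hint2 j)
        refine hmul.trans ?_
        filter_upwards [hcoord j] with ω hω
        simp only [Pi.mul_apply]
        rw [hω]
      have hip_eq : (fun ω => (⟪v i ω, g i k ω⟫ : ℝ))
          = ∑ j, fun ω => v i ω j * g i k ω j := by
        funext ω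
        rw [Finset.sum_apply]
        rw [PiLp.inner_apply]
        simp [RCLike.inner_apply, mul_comm]
      rw [hip_eq]
      refine (condExp_finset_sum (fun j _ => hint1 j) (𝒢 k)).trans ?_
      have hvsum : ∀ ω, ∑ j, v i ω j * v i ω j = ‖v i ω‖ ^ 2 := by
        intro ω
        rw [← real_inner_self_eq_norm_sq, PiLp.inner_apply]
        simp [RCLike.inner_apply, pow_two]
      have hall := ae_all_iff.2 hterm
      filter_upwards [hall] with ω hω
      rw [Finset.sum_apply, Finset.sum_congr rfl fun j _ => hω j]
      exact hvsum ω
    -- assemble the per-coordinate bound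
    have hV2_smG : StronglyMeasurable[𝒢 k] (fun ω => ‖v i ω‖ ^ 2) := by
      simp_rw [pow_two]; exact (hv_smG i).norm.mul (hv_smG i).norm
    have int_V2 : Integrable (fun ω => ‖v i ω‖ ^ 2) μ := by
      refine aux_integrable_of_bdd (hV2_smG.mono hmk).aestronglyMeasurable
        (C := (Mgrad + Lc * Θ) ^ 2) fun ω => ?_
      rw [abs_of_nonneg (by positivity)]
      exact pow_le_pow_left₀ (norm_nonneg _) (hv_bd i ω) 2
    have int_IP : Integrable (fun ω => (⟪v i ω, g i k ω⟫ : ℝ)) μ := by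
      refine Integrable.mono' ((int_gnorm i).const_mul (Mgrad + Lc * Θ))
        (((hv_smG i).mono hmk).aestronglyMeasurable.inner (hg_aesm i))
        (ae_of_all _ fun ω => ?_)
      rw [Real.norm_eq_abs]
      exact (abs_real_inner_le_norm _ _).trans
        (mul_le_mul_of_nonneg_right (hv_bd i ω) (norm_nonneg _))
    have hdec : (fun ω' => ‖g i k ω'‖ ^ 2) = (fun ω' => ‖g i k ω' - v i ω'‖ ^ 2)
        + ((2 : ℝ) • (fun ω' => (⟪v i ω', g i k ω'⟫ : ℝ)) - fun ω' => ‖v i ω'‖ ^ 2) := by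
      funext ω
      have h1 := norm_sub_sq_real (g i k ω) (v i ω)
      have h2 := real_inner_comm (g i k ω) (v i ω)
      simp only [Pi.add_apply, Pi.sub_apply, Pi.smul_apply, smul_eq_mul]
      rw [h1, ← h2]
      ring
    have hsplit2 : μ[fun ω' => ‖g i k ω'‖ ^ 2|𝒢 k] =ᵐ[μ]
        fun ω => (μ[fun ω' => ‖g i k ω' - v i ω'‖ ^ 2|𝒢 k]) ω
          + (2 * (μ[fun ω' => (⟪v i ω', g i k ω'⟫ : ℝ)|𝒢 k]) ω - ‖v i ω‖ ^ 2) := by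
      rw [hdec]
      have h2 := condExp_add (m := 𝒢 k) (int_hi2 i) ((int_IP.smul (2 : ℝ)).sub int_V2)
      have h3 := condExp_sub (m := 𝒢 k) (int_IP.smul (2 : ℝ)) int_V2
      have h4 := condExp_smul (m := 𝒢 k) (μ := μ) (2 : ℝ) (fun ω' => (⟪v i ω', g i k ω'⟫ : ℝ))
      have h5 : μ[fun ω => ‖v i ω‖ ^ 2|𝒢 k] = fun ω => ‖v i ω‖ ^ 2 :=
        condExp_of_stronglyMeasurable hmk hV2_smG int_V2
      filter_upwards [h2, h3, h4] with ω h2ω h3ω h4ω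
      rw [h2ω, Pi.add_apply, h3ω, Pi.sub_apply, h4ω, h5]
      simp only [Pi.smul_apply, smul_eq_mul]
    filter_upwards [hsplit2, hIP, hc2 i k] with ω h1 h2 h3
    rw [h1, h2]
    nlinarith [sq_nonneg ‖v i ω‖]
  -- conditional expectation of the squared multi-gradient norm
  have hQ_cond : ∀ᵐ ω ∂μ, (μ[fun ω' => ‖gw ω'‖ ^ 2|𝒢 k]) ω ≤ Lg2 := by
    have h1 : μ[fun ω' => ‖gw ω'‖ ^ 2|𝒢 k] ≤ᵐ[μ]
        μ[fun ω' => (m : ℝ) * ∑ i, ‖g i k ω'‖ ^ 2|𝒢 k] :=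
      condExp_mono int_Q (int_g2_sum.const_mul m) (ae_of_all _ fun ω => hQ_ptle ω)
    have h2 : μ[fun ω' => (m : ℝ) * ∑ i, ‖g i k ω'‖ ^ 2|𝒢 k] =ᵐ[μ]
        fun ω => (m : ℝ) * ∑ i, (μ[fun ω' => ‖g i k ω'‖ ^ 2|𝒢 k]) ω := by
      have e : (fun ω' => (m : ℝ) * ∑ i, ‖g i k ω'‖ ^ 2)
          = (m : ℝ) • fun ω' => ∑ i, ‖g i k ω'‖ ^ 2 := by
        funext ω'; simp [smul_eq_mul]
      rw [e]
      refine (condExp_smul (m := 𝒢 k) (μ := μ) ((m : ℝ))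
        (fun ω' => ∑ i, ‖g i k ω'‖ ^ 2)).trans ?_
      have e2 : (fun ω' => ∑ i, ‖g i k ω'‖ ^ 2) = ∑ i, fun ω' => ‖g i k ω'‖ ^ 2 := by
        funext ω'; simp [Finset.sum_apply]
      rw [e2]
      have h3 := condExp_finset_sum (μ := μ) (m := 𝒢 k) fun i (_ : i ∈ Finset.univ) => int_g2 i
      filter_upwards [h3] with ω h3ω
      simp only [Pi.smul_apply, smul_eq_mul, h3ω, Finset.sum_apply]
    have h3 := ae_all_iff.2 hkey
    filter_upwards [h1, h2, h3] with ω hω1 hω2 hω3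
    refine (hω1.trans_eq hω2).trans ?_
    have hGmax0 : (0 : ℝ) ≤ Gmax := by
      have h := (hGmax.2 ⟨i₀, rfl⟩ : Ghat i₀ ^ 2 + 1 ≤ Gmax)
      nlinarith [sq_nonneg (Ghat i₀)]
    have hstep : ∀ i, (μ[fun ω' => ‖g i k ω'‖ ^ 2|𝒢 k]) ω
        ≤ G i ^ 2 + Gmax * (Mgrad + Lc * Θ) ^ 2 := by
      intro i
      refine (hω3 i).trans ?_
      have ha1 : Ghat i ^ 2 + 1 ≤ Gmax := (hGmax.2 ⟨i, rfl⟩ : Ghat i ^ 2 + 1 ≤ Gmax)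
      have ha2 : ‖v i ω‖ ^ 2 ≤ (Mgrad + Lc * Θ) ^ 2 :=
        pow_le_pow_left₀ (norm_nonneg _) (hv_bd i ω) 2
      have : (Ghat i ^ 2 + 1) * ‖v i ω‖ ^ 2 ≤ Gmax * (Mgrad + Lc * Θ) ^ 2 :=
        mul_le_mul ha1 ha2 (by positivity) hGmax0
      linarith
    calc (m : ℝ) * ∑ i, (μ[fun ω' => ‖g i k ω'‖ ^ 2|𝒢 k]) ω
        ≤ (m : ℝ) * ∑ i, (G i ^ 2 + Gmax * (Mgrad + Lc * Θ) ^ 2) := by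
          refine mul_le_mul_of_nonneg_left (Finset.sum_le_sum fun i _ => hstep i)
            (Nat.cast_nonneg m)
      _ = Lg2 := by
          rw [Finset.sum_add_distrib, Finset.sum_const, Finset.card_univ, Fintype.card_fin,
            nsmul_eq_mul, hLg2]
          ring
  -- strong convexity pointwise bound
  have hSd_ge : ∀ ω, ((∑ i, lam k ω i * f i (x k ω)) - ∑ i, lam k ω i * f i xstar)
      + c / 2 * ‖d ω‖ ^ 2 ≤ (⟪Sl ω, d ω⟫ : ℝ) := by
    intro ω
    have hterm : ∀ i, lam k ω i * ((f i (x k ω) - f i xstar) + c / 2 * ‖d ω‖ ^ 2)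
        ≤ lam k ω i * (⟪v i ω, d ω⟫ : ℝ) := by
      intro i
      refine mul_le_mul_of_nonneg_left ?_ (hlam_nonneg ω i)
      have h1 := hsc i (x k ω) xstar
      have h2 : (⟪v i ω, xstar - x k ω⟫ : ℝ) = -(⟪v i ω, d ω⟫ : ℝ) := by
        rw [show xstar - x k ω = -(x k ω - xstar) by abel, inner_neg_right]
      have h3 : ‖xstar - x k ω‖ = ‖d ω‖ := norm_sub_rev _ _
      have h4 : c ≤ cv i := hc.2 ⟨i, rfl⟩
      rw [h2, h3] at h1
      nlinarith [sq_nonneg ‖d ω‖]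
    have hSd_eq : (⟪Sl ω, d ω⟫ : ℝ) = ∑ i, lam k ω i * (⟪v i ω, d ω⟫ : ℝ) := by
      rw [hSldef]
      rw [sum_inner]
      exact Finset.sum_congr rfl fun i _ => real_inner_smul_left _ _ _
    rw [hSd_eq]
    calc ((∑ i, lam k ω i * f i (x k ω)) - ∑ i, lam k ω i * f i xstar)
          + c / 2 * ‖d ω‖ ^ 2
        = ∑ i, lam k ω i * ((f i (x k ω) - f i xstar) + c / 2 * ‖d ω‖ ^ 2) := by
          simp only [mul_add, mul_sub, Finset.sum_add_distrib, Finset.sum_sub_distrib,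
            ← Finset.sum_mul, hlam_sum ω]
          ring
      _ ≤ ∑ i, lam k ω i * (⟪v i ω, d ω⟫ : ℝ) := Finset.sum_le_sum fun i _ => hterm i
  -- final assembly
  filter_upwards [hqR, hlin, hBsplit, hE1_cond, hQ_cond] with ω h1 h2 h3 h4 h5
  have e1 : (μ[fun ω' => ‖x (k + 1) ω' - xstar‖ ^ 2|𝒢 k]) ω
      ≤ ‖d ω‖ ^ 2 - 2 * α k * ((μ[fun ω' => (⟪gw ω', d ω'⟫ : ℝ)|𝒢 k]) ω)
        + α k ^ 2 * ((μ[fun ω' => ‖gw ω'‖ ^ 2|𝒢 k]) ω) := h2 ▸ h1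
  have e2 : (μ[fun ω' => (⟪gw ω', d ω'⟫ : ℝ)|𝒢 k]) ω
      ≥ ((∑ i, lam k ω i * f i (x k ω)) - ∑ i, lam k ω i * f i xstar)
        + c / 2 * ‖d ω‖ ^ 2 - Θ * (1 + β * MS) * (α k * LS) := by
    rw [h3]
    have := hSd_ge ω
    linarith
  have hAeq : ‖d ω‖ ^ 2 = ‖x k ω - xstar‖ ^ 2 := rfl
  have p1 : 2 * α k * ((μ[fun ω' => (⟪gw ω', d ω'⟫ : ℝ)|𝒢 k]) ω)
      ≥ 2 * α k * (((∑ i, lam k ω i * f i (x k ω)) - ∑ i, lam k ω i * f i xstar)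
        + c / 2 * ‖d ω‖ ^ 2 - Θ * (1 + β * MS) * (α k * LS)) :=
    mul_le_mul_of_nonneg_left e2 (by positivity)
  have p2 : α k ^ 2 * ((μ[fun ω' => ‖gw ω'‖ ^ 2|𝒢 k]) ω) ≤ α k ^ 2 * Lg2 :=
    mul_le_mul_of_nonneg_left h5 (sq_nonneg _)
  rw [hMdef]
  rw [← hAeq]
  nlinarith [e1, p1, p2]
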